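/- (Theorem 1(b)) In the partially observed branching process, the estimator m̃_n = (Σ_{i=1}^{n} Z_i)/(Σ_{i=0}^{n−1} Z_i) converges to m almost surely on the explosion set {ω : X_n(ω) → ∞}, as n → ∞; here m = π·m_- + (1−π)·m_+. -/

import Mathlib

open MeasureTheory ProbabilityTheory Filter
open scoped Classical ENNReal Topology

namespace POBP

variable {Ω : Type*}

/-- combined offspring variable -/
def ecomb (ξ ξ' d : ℕ → ℕ → Ω → ℕ) (n i : ℕ) (ω : Ω) : ℕ :=
  ξ n i ω * (1 - d n i ω) + ξ' n i ω * d n i ω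

/-- cumulative population before generation n -/
def Ucum (X : ℕ → Ω → ℕ) (n : ℕ) (ω : Ω) : ℕ := ∑ i ∈ Finset.range n, X i ω

lemma Ucum_succ (X : ℕ → Ω → ℕ) (n : ℕ) (ω : Ω) :
    Ucum X (n+1) ω = Ucum X n ω + X n ω := Finset.sum_range_succ _ _

lemma Ucum_mono (X : ℕ → Ω → ℕ) {a b : ℕ} (h : a ≤ b) (ω : Ω) :
    Ucum X a ω ≤ Ucum X b ω :=
  Finset.sum_le_sum_of_subset (Finset.range_subset_range.mpr h)

/-- position of global slot k : (generation, index-within-generation), with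
fallback value (k, k+1) when the process has died before producing k+1 individuals. -/
noncomputable def posOf (X : ℕ → Ω → ℕ) (k : ℕ) (ω : Ω) : ℕ × ℕ :=
  if h : ∃ n, k < Ucum X (n+1) ω then (Nat.find h, k - Ucum X (Nat.find h) ω)
  else (k, k+1)

section Det

variable {ξ ξ' d : ℕ → ℕ → Ω → ℕ} {X Z : ℕ → Ω → ℕ}
variable (hX0 : ∀ ω, X 0 ω = 1)
variable (hXrec : ∀ n ω, X (n + 1) ω =
      ∑ i ∈ Finset.range (X n ω), (ξ n i ω * (1 - d n i ω) + ξ' n i ω * d n i ω))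

include hXrec in
lemma dead_propagate {ω : Ω} {r : ℕ} (h : X r ω = 0) : ∀ s, r ≤ s → X s ω = 0 := by
  intro s hs
  induction s with
  | zero =>
    have : r = 0 := by omega
    subst this; exact h
  | succ t ih =>
    rcases Nat.lt_or_ge r (t+1) with h1 | h1
    · have ht : X t ω = 0 := by
        rcases Nat.lt_or_ge r t with h2 | h2
        · exact ih (by omega)
        · have : r = t := by omega
          subst this; exact h
      rw [hXrec, ht]; simp
    · have : r = t + 1 := by omega
      subst this; exact h

include hXrec in
lemma Ucum_stab {ω : Ω} {r n : ℕ} (h : X r ω = 0) (hrn : r ≤ n) :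
    Ucum X n ω = Ucum X r ω := by
  unfold Ucum
  rw [← Finset.sum_subset (Finset.range_subset_range.mpr hrn)]
  intro x hx hxr
  exact dead_propagate hXrec h x (by simpa using hxr)

/-- if total population through generation k is ≤ k, someone died -/
lemma exists_dead {ω : Ω} {k : ℕ} (h : Ucum X (k+1) ω ≤ k) : ∃ r ≤ k, X r ω = 0 := by
  by_contra hc
  push_neg at hc
  have : k + 1 ≤ Ucum X (k+1) ω := by
    have : ∀ i ∈ Finset.range (k+1), 1 ≤ X i ω := by
      intro i hi
      have := hc i (by simpa using Nat.lt_succ_iff.mp (Finset.mem_range.mp hi))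
      omega
    calc k + 1 = ∑ _i ∈ Finset.range (k+1), 1 := by simp
    _ ≤ _ := Finset.sum_le_sum this
  omega

include hXrec in
lemma not_exists_iff {ω : Ω} {k : ℕ} :
    (¬ ∃ n, k < Ucum X (n+1) ω) ↔ Ucum X (k+1) ω ≤ k := by
  constructor
  · intro h
    push_neg at h
    exact h k
  · intro h hex
    obtain ⟨n, hn⟩ := hex
    obtain ⟨r, hrk, hr⟩ := exists_dead h
    have h1 : Ucum X (n+1) ω ≤ k := by
      rcases le_or_gt (n+1) (k+1) with h2 | h2
      · exact le_trans (Ucum_mono X h2 ω) h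
      · have e1 : Ucum X (n+1) ω = Ucum X r ω := Ucum_stab hXrec hr (by omega)
        have e2 : Ucum X (k+1) ω = Ucum X r ω := Ucum_stab hXrec hr (by omega)
        omega
    omega

include hXrec in
lemma pos_eq_real_iff {ω : Ω} {k n i : ℕ} (hni : ¬ (n = k ∧ i = k+1)) :
    posOf X k ω = (n, i) ↔ (Ucum X n ω ≤ k ∧ k < Ucum X (n+1) ω ∧ k - Ucum X n ω = i) := by
  constructor
  · intro h
    unfold posOf at h
    split_ifs at h with hex
    · have hfind := Nat.find_spec hex
      have h1 : Nat.find hex = n := by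
        have := congrArg Prod.fst h; simpa using this
      have h2 : k - Ucum X n ω = i := by
        have := congrArg Prod.snd h; simp at this; rw [← h1]; exact this
      subst h1
      refine ⟨?_, hfind, h2⟩
      rcases Nat.eq_zero_or_pos (Nat.find hex) with h0 | h0
      · rw [h0]; simp [Ucum]
      · have := Nat.find_min hex (m := Nat.find hex - 1) (by omega)
        have heq : Nat.find hex - 1 + 1 = Nat.find hex := by omega
        rw [heq] at this
        omega
    · exfalso
      have h1 : k = n := by have := congrArg Prod.fst h; simpa using this
      have h2 : k + 1 = i := by have := congrArg Prod.snd h; simpa using this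
      exact hni ⟨h1.symm, h2.symm⟩
  · rintro ⟨h1, h2, h3⟩
    have hex : ∃ n, k < Ucum X (n+1) ω := ⟨n, h2⟩
    unfold posOf
    rw [dif_pos hex]
    have hfn : Nat.find hex = n := by
      have hle : Nat.find hex ≤ n := Nat.find_min' hex h2
      rcases Nat.lt_or_ge (Nat.find hex) n with hlt | hge
      · exfalso
        have := Nat.find_spec hex
        have : Ucum X (Nat.find hex + 1) ω ≤ Ucum X n ω := Ucum_mono X (by omega) ω
        omega
      · omega
    rw [hfn, h3]

include hXrec in
lemma pos_eq_fallback_iff {ω : Ω} {k : ℕ} :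
    posOf X k ω = (k, k+1) ↔ Ucum X (k+1) ω ≤ k := by
  constructor
  · intro h
    unfold posOf at h
    split_ifs at h with hex
    · exfalso
      have h2 : k - Ucum X (Nat.find hex) ω = k + 1 := by
        have := congrArg Prod.snd h; simpa using this
      omega
    · exact (not_exists_iff hXrec).mp hex
  · intro h
    unfold posOf
    rw [dif_neg ((not_exists_iff hXrec).mpr h)]

include hXrec in
lemma alive_of_real {ω : Ω} {k n : ℕ} (h1 : Ucum X n ω ≤ k) (h2 : k < Ucum X (n+1) ω) :
    n ≤ Ucum X n ω := by
  by_contra hc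
  push_neg at hc
  -- Ucum n < n : someone among generations < n died
  have : ∃ r < n, X r ω = 0 := by
    by_contra hc2
    push_neg at hc2
    have : ∀ i ∈ Finset.range n, 1 ≤ X i ω := fun i hi => by
      have := hc2 i (Finset.mem_range.mp hi); omega
    have : n ≤ Ucum X n ω := by
      calc n = ∑ _i ∈ Finset.range n, 1 := by simp
      _ ≤ _ := Finset.sum_le_sum this
    omega
  obtain ⟨r, hrn, hr⟩ := this
  have e1 : Ucum X n ω = Ucum X r ω := Ucum_stab hXrec hr (by omega)
  have e2 : Ucum X (n+1) ω = Ucum X r ω := Ucum_stab hXrec hr (by omega)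
  omega

include hXrec in
lemma pos_mem {ω : Ω} (k : ℕ) :
    (posOf X k ω).1 ≤ k ∧ (posOf X k ω).2 ≤ k + 1 := by
  unfold posOf
  split_ifs with hex
  · simp only
    have hspec := Nat.find_spec hex
    have h1 : Ucum X (Nat.find hex) ω ≤ k := by
      rcases Nat.eq_zero_or_pos (Nat.find hex) with h0 | h0
      · rw [h0]; simp [Ucum]
      · have := Nat.find_min hex (m := Nat.find hex - 1) (by omega)
        have heq : Nat.find hex - 1 + 1 = Nat.find hex := by omega
        rw [heq] at this; omega
    have := alive_of_real hXrec h1 hspec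
    exact ⟨by omega, by omega⟩
  · exact ⟨le_refl _, le_refl _⟩

include hXrec in
lemma pos_slot {ω : Ω} {n k : ℕ} (h1 : Ucum X n ω ≤ k) (h2 : k < Ucum X (n+1) ω) :
    posOf X k ω = (n, k - Ucum X n ω) := by
  have hni : ¬ (n = k ∧ k - Ucum X n ω = k + 1) := by
    rintro ⟨rfl, hh⟩; omega
  exact (pos_eq_real_iff (hXrec := hXrec) hni).mpr ⟨h1, h2, rfl⟩

include hXrec in
lemma gen_sum (g : ℕ → ℕ → Ω → ℕ) {ω : Ω} (n : ℕ) :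
    ∑ k ∈ Finset.Ico (Ucum X n ω) (Ucum X (n+1) ω),
      g (posOf X k ω).1 (posOf X k ω).2 ω = ∑ i ∈ Finset.range (X n ω), g n i ω := by
  have hU : Ucum X (n+1) ω = Ucum X n ω + X n ω := Ucum_succ X n ω
  rw [hU, Finset.sum_Ico_eq_sum_range]
  simp only [Nat.add_sub_cancel_left]
  apply Finset.sum_congr rfl
  intro i hi
  have hi' : i < X n ω := Finset.mem_range.mp hi
  have hpos : posOf X (Ucum X n ω + i) ω = (n, i) := by
    have := pos_slot hXrec (ω := ω) (n := n) (k := Ucum X n ω + i)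
      (by omega) (by omega)
    simpa using this
  rw [hpos]

include hX0 hXrec in
lemma Z_cumsum (hZ : ∀ n ω, Z n ω = ∑ i ∈ Finset.range (X n ω), d n i ω)
    {ω : Ω} (n : ℕ) :
    ∑ i ∈ Finset.range n, Z i ω
      = ∑ k ∈ Finset.range (Ucum X n ω), d (posOf X k ω).1 (posOf X k ω).2 ω := by
  induction n with
  | zero => simp [Ucum]
  | succ t ih =>
    rw [Finset.sum_range_succ, ih, hZ]
    rw [← gen_sum (hXrec := hXrec) d t]
    rw [Finset.range_eq_Ico, Finset.range_eq_Ico]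
    exact Finset.sum_Ico_consecutive (fun k => d (posOf X k ω).1 (posOf X k ω).2 ω) (Nat.zero_le _) (Ucum_mono X (Nat.le_succ t) ω)

include hX0 hXrec in
lemma X_cumsum {ω : Ω} (n : ℕ) :
    Ucum X (n+1) ω = 1 + ∑ k ∈ Finset.range (Ucum X n ω),
      ecomb ξ ξ' d (posOf X k ω).1 (posOf X k ω).2 ω := by
  have key : ∀ t, ∑ i ∈ Finset.range t, X (i+1) ω
      = ∑ k ∈ Finset.range (Ucum X t ω), ecomb ξ ξ' d (posOf X k ω).1 (posOf X k ω).2 ω := by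
    intro t
    induction t with
    | zero => simp [Ucum]
    | succ t ih =>
      rw [Finset.sum_range_succ, ih]
      have h2 : X (t+1) ω = ∑ k ∈ Finset.Ico (Ucum X t ω) (Ucum X (t+1) ω),
          ecomb ξ ξ' d (posOf X k ω).1 (posOf X k ω).2 ω := by
        rw [gen_sum (hXrec := hXrec) (ecomb ξ ξ' d) t]
        exact hXrec t ω
      rw [h2, Finset.range_eq_Ico, Finset.range_eq_Ico]
      exact Finset.sum_Ico_consecutive (fun k => ecomb ξ ξ' d (posOf X k ω).1 (posOf X k ω).2 ω) (Nat.zero_le _) (Ucum_mono X (Nat.le_succ t) ω)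
  have h1 : Ucum X (n+1) ω = 1 + ∑ i ∈ Finset.range n, X (i+1) ω := by
    unfold Ucum
    rw [Finset.sum_range_succ']
    rw [hX0]
    omega
  rw [h1, key]

include hXrec in
lemma find_le {ω : Ω} {j : ℕ} (hexj : ∃ n, j < Ucum X (n+1) ω) :
    Ucum X (Nat.find hexj) ω ≤ j := by
  rcases Nat.eq_zero_or_pos (Nat.find hexj) with h0 | h0
  · rw [h0]; simp [Ucum]
  · have := Nat.find_min hexj (m := Nat.find hexj - 1) (by omega)
    have heq : Nat.find hexj - 1 + 1 = Nat.find hexj := by omega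
    rw [heq] at this; omega

include hXrec in
lemma pos_order {ω : Ω} {j k : ℕ} (h : j < k) :
    (posOf X j ω).1 ≤ (posOf X k ω).1 ∧ posOf X j ω ≠ posOf X k ω := by
  by_cases hexj : ∃ n, j < Ucum X (n+1) ω
  · by_cases hexk : ∃ n, k < Ucum X (n+1) ω
    · have hj : posOf X j ω = (Nat.find hexj, j - Ucum X (Nat.find hexj) ω) := by
        unfold posOf; rw [dif_pos hexj]
      have hk : posOf X k ω = (Nat.find hexk, k - Ucum X (Nat.find hexk) ω) := by
        unfold posOf; rw [dif_pos hexk]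
      have hle : Nat.find hexj ≤ Nat.find hexk := by
        apply Nat.find_min' hexj
        calc j < k := h
        _ < _ := Nat.find_spec hexk
      have hUj := find_le (hXrec := hXrec) hexj
      have hUk := find_le (hXrec := hXrec) hexk
      constructor
      · rw [hj, hk]; exact hle
      · rw [hj, hk]
        intro heq
        have h1 : Nat.find hexj = Nat.find hexk := congrArg Prod.fst heq
        have h2 : j - Ucum X (Nat.find hexj) ω = k - Ucum X (Nat.find hexk) ω :=
          congrArg Prod.snd heq
        rw [h1] at h2 hUj
        omega
    · have hk : posOf X k ω = (k, k+1) := by unfold posOf; rw [dif_neg hexk]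
      have hmem := pos_mem (hXrec := hXrec) (ω := ω) j
      constructor
      · rw [hk]; omega
      · rw [hk]
        intro heq
        have h2 := congrArg Prod.snd heq
        simp only at h2
        omega
  · have hUj : Ucum X (j+1) ω ≤ j := (not_exists_iff hXrec).mp hexj
    obtain ⟨r, hrj, hr0⟩ := exists_dead hUj
    have hexk : ¬ ∃ n, k < Ucum X (n+1) ω := by
      apply (not_exists_iff hXrec).mpr
      have e1 : Ucum X (k+1) ω = Ucum X r ω := Ucum_stab hXrec hr0 (by omega)
      have e2 : Ucum X r ω ≤ Ucum X (j+1) ω := Ucum_mono X (by omega) ω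
      omega
    have hj : posOf X j ω = (j, j+1) := by unfold posOf; rw [dif_neg hexj]
    have hk : posOf X k ω = (k, k+1) := by unfold posOf; rw [dif_neg hexk]
    rw [hj, hk]
    refine ⟨by omega, ?_⟩
    intro heq
    have h1 := congrArg Prod.fst heq
    simp only at h1
    omega

end Det

section Meas

/-- coordinate index type -/
abbrev Coord := (ℕ × ℕ) ⊕ ((ℕ × ℕ) ⊕ (ℕ × ℕ))

/-- the family of all primitive random variables -/
def fam (ξ ξ' d : ℕ → ℕ → Ω → ℕ) : Coord → Ω → ℕ :=
  Sum.elim (fun q : ℕ × ℕ => ξ q.1 q.2)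
    (Sum.elim (fun q : ℕ × ℕ => ξ' q.1 q.2) (fun q : ℕ × ℕ => d q.1 q.2))

/-- the generation (row) of a coordinate -/
def crow : Coord → ℕ := Sum.elim Prod.fst (Sum.elim Prod.fst Prod.fst)

/-- the σ-algebra generated by a single coordinate -/
def calg (ξ ξ' d : ℕ → ℕ → Ω → ℕ) (c : Coord) : MeasurableSpace Ω :=
  MeasurableSpace.comap (fam ξ ξ' d c) inferInstance

/-- the σ-algebra of rows before n -/
def Halg (ξ ξ' d : ℕ → ℕ → Ω → ℕ) (n : ℕ) : MeasurableSpace Ω :=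
  ⨆ c ∈ {c : Coord | crow c < n}, calg ξ ξ' d c

/-- the coordinates of cell (n,i) -/
def triple (n i : ℕ) : Set Coord :=
  {Sum.inl (n,i), Sum.inr (Sum.inl (n,i)), Sum.inr (Sum.inr (n,i))}

/-- the σ-algebra generated by the three variables at (n,i) -/
def Kalg (ξ ξ' d : ℕ → ℕ → Ω → ℕ) (n i : ℕ) : MeasurableSpace Ω :=
  ⨆ c ∈ triple n i, calg ξ ξ' d c

variable [MeasurableSpace Ω]
variable {ξ ξ' d : ℕ → ℕ → Ω → ℕ} {X Z : ℕ → Ω → ℕ}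
variable (hmξ : ∀ n i, Measurable (ξ n i)) (hmξ' : ∀ n i, Measurable (ξ' n i))
  (hmd : ∀ n i, Measurable (d n i))
variable (hX0 : ∀ ω, X 0 ω = 1)
variable (hXrec : ∀ n ω, X (n + 1) ω =
      ∑ i ∈ Finset.range (X n ω), (ξ n i ω * (1 - d n i ω) + ξ' n i ω * d n i ω))

include hmξ hmξ' hmd in
lemma fam_meas : ∀ c, Measurable (fam ξ ξ' d c) := by
  rintro (q | q | q)
  · exact hmξ q.1 q.2
  · exact hmξ' q.1 q.2
  · exact hmd q.1 q.2

include hmξ hmξ' hmd in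
lemma calg_le : ∀ c, calg ξ ξ' d c ≤ ‹MeasurableSpace Ω› := fun c =>
  measurable_iff_comap_le.mp (fam_meas hmξ hmξ' hmd c)

include hmξ hmξ' hmd in
lemma Halg_le (n : ℕ) : Halg ξ ξ' d n ≤ ‹MeasurableSpace Ω› :=
  iSup₂_le fun c _ => calg_le hmξ hmξ' hmd c

include hmξ hmξ' hmd in
lemma Kalg_le (n i : ℕ) : Kalg ξ ξ' d n i ≤ ‹MeasurableSpace Ω› :=
  iSup₂_le fun c _ => calg_le hmξ hmξ' hmd c

lemma Halg_mono {a b : ℕ} (h : a ≤ b) : Halg ξ ξ' d a ≤ Halg ξ ξ' d b := by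
  apply iSup₂_le
  intro c hc
  exact le_iSup₂_of_le c (by simp only [Set.mem_setOf_eq] at hc ⊢; omega) le_rfl

lemma Kalg_le_Halg {n m : ℕ} (i : ℕ) (h : n < m) : Kalg ξ ξ' d n i ≤ Halg ξ ξ' d m := by
  apply iSup₂_le
  intro c hc
  refine le_iSup₂_of_le c ?_ le_rfl
  rcases hc with h1 | h1 | h1 <;> subst h1 <;> simpa [crow]

lemma meas_calg_self (c : Coord) : Measurable[calg ξ ξ' d c] (fam ξ ξ' d c) :=
  measurable_iff_comap_le.mpr le_rfl

lemma meas_K_ξ (n i : ℕ) : Measurable[Kalg ξ ξ' d n i] (ξ n i) :=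
  ((meas_calg_self (ξ := ξ) (ξ' := ξ') (d := d) (Sum.inl (n,i))).mono
    (le_iSup₂_of_le (Sum.inl (n,i)) (by simp [triple]) le_rfl) le_rfl)

lemma meas_K_ξ' (n i : ℕ) : Measurable[Kalg ξ ξ' d n i] (ξ' n i) :=
  ((meas_calg_self (ξ := ξ) (ξ' := ξ') (d := d) (Sum.inr (Sum.inl (n,i)))).mono
    (le_iSup₂_of_le (Sum.inr (Sum.inl (n,i))) (by simp [triple]) le_rfl) le_rfl)

lemma meas_K_d (n i : ℕ) : Measurable[Kalg ξ ξ' d n i] (d n i) :=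
  ((meas_calg_self (ξ := ξ) (ξ' := ξ') (d := d) (Sum.inr (Sum.inr (n,i)))).mono
    (le_iSup₂_of_le (Sum.inr (Sum.inr (n,i))) (by simp [triple]) le_rfl) le_rfl)

/-- combine two ℕ-valued measurable functions with an arbitrary binary operation -/
lemma meas_comb {M : MeasurableSpace Ω} {f g : Ω → ℕ} (hf : Measurable[M] f)
    (hg : Measurable[M] g) (op : ℕ → ℕ → ℕ) :
    Measurable[M] (fun ω => op (f ω) (g ω)) := by
  have hp : Measurable[M] (fun ω => (f ω, g ω)) := Measurable.prod hf hg
  exact (measurable_of_countable (fun p : ℕ × ℕ => op p.1 p.2)).comp hp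

lemma meas_K_e (n i : ℕ) : Measurable[Kalg ξ ξ' d n i] (ecomb ξ ξ' d n i) := by
  unfold ecomb
  apply meas_comb (meas_comb (meas_K_ξ n i) (meas_K_d n i) (fun a b => a * (1 - b)))
    (meas_comb (meas_K_ξ' n i) (meas_K_d n i) (fun a b => a * b)) (· + ·)

lemma meas_sum_range {M : MeasurableSpace Ω} {f : Ω → ℕ} {g : ℕ → Ω → ℕ}
    (hf : Measurable[M] f) (hg : ∀ i, Measurable[M] (g i)) :
    Measurable[M] (fun ω => ∑ i ∈ Finset.range (f ω), g i ω) := by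
  have hfix : ∀ j : ℕ, Measurable[M] (fun ω => ∑ i ∈ Finset.range j, g i ω) := by
    intro j
    induction j with
    | zero => simpa using @measurable_const ℕ Ω _ M 0
    | succ t ih =>
      have : (fun ω => ∑ i ∈ Finset.range (t+1), g i ω)
          = fun ω => (∑ i ∈ Finset.range t, g i ω) + g t ω := by
        funext ω; exact Finset.sum_range_succ _ _
      rw [this]
      exact meas_comb ih (hg t) (· + ·)
  apply measurable_to_countable' (α := ℕ)
  intro y
  have : (fun ω => ∑ i ∈ Finset.range (f ω), g i ω) ⁻¹' {y}
      = ⋃ j : ℕ, ({ω | f ω = j} ∩ {ω | ∑ i ∈ Finset.range j, g i ω = y}) := by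
    ext ω
    simp only [Set.mem_preimage, Set.mem_singleton_iff, Set.mem_iUnion, Set.mem_inter_iff,
      Set.mem_setOf_eq]
    constructor
    · intro h; exact ⟨f ω, rfl, h⟩
    · rintro ⟨j, rfl, h⟩; exact h
  rw [this]
  exact MeasurableSet.iUnion fun j =>
    (hf (MeasurableSet.singleton j)).inter (hfix j (MeasurableSet.singleton y))

include hmξ hmξ' hmd hX0 hXrec in
lemma meas_X : ∀ n, Measurable[Halg ξ ξ' d n] (X n) := by
  intro n
  induction n with
  | zero =>
    have : X 0 = fun _ => 1 := funext hX0
    rw [this]; exact @measurable_const ℕ Ω _ _ 1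
  | succ t ih =>
    have : X (t+1) = fun ω => ∑ i ∈ Finset.range (X t ω), ecomb ξ ξ' d t i ω :=
      funext (hXrec t)
    rw [this]
    exact meas_sum_range (ih.mono (Halg_mono (by omega)) le_rfl)
      (fun i => (meas_K_e t i).mono (Kalg_le_Halg i (by omega)) le_rfl)

include hmξ hmξ' hmd hX0 hXrec in
lemma meas_U (n : ℕ) : Measurable[Halg ξ ξ' d n] (Ucum X n) := by
  have : Ucum X n = fun ω => ∑ i ∈ Finset.range n, X i ω := rfl
  rw [this]
  have h : ∀ j ≤ n, Measurable[Halg ξ ξ' d n] (fun ω => ∑ i ∈ Finset.range j, X i ω) := by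
    intro j hj
    induction j with
    | zero => simpa using @measurable_const ℕ Ω _ _ 0
    | succ t ih =>
      have e : (fun ω => ∑ i ∈ Finset.range (t+1), X i ω)
          = fun ω => (∑ i ∈ Finset.range t, X i ω) + X t ω := by
        funext ω; exact Finset.sum_range_succ _ _
      rw [e]
      exact meas_comb (ih (by omega))
        ((meas_X hmξ hmξ' hmd hX0 hXrec t).mono (Halg_mono (by omega)) le_rfl) (· + ·)
  exact h n le_rfl

include hmξ hmξ' hmd hX0 hXrec in
lemma meas_U' (n : ℕ) : Measurable[Halg ξ ξ' d n] (Ucum X (n+1)) := by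
  have e : Ucum X (n+1) = fun ω => Ucum X n ω + X n ω := by
    funext ω; exact Ucum_succ X n ω
  rw [e]
  exact meas_comb (meas_U hmξ hmξ' hmd hX0 hXrec n) (meas_X hmξ hmξ' hmd hX0 hXrec n) (· + ·)

include hmξ hmξ' hmd hX0 hXrec in
lemma cell_meas (k n i : ℕ) :
    MeasurableSet[Halg ξ ξ' d n] {ω | posOf X k ω = (n, i)} := by
  by_cases hni : n = k ∧ i = k + 1
  · obtain ⟨rfl, rfl⟩ := hni
    have : {ω | posOf X n ω = (n, n+1)} = (Ucum X (n+1)) ⁻¹' {j : ℕ | j ≤ n} := by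
      ext ω
      simp only [Set.mem_setOf_eq, Set.mem_preimage]
      exact pos_eq_fallback_iff hXrec
    rw [this]
    exact meas_U' hmξ hmξ' hmd hX0 hXrec n trivial
  · have : {ω | posOf X k ω = (n, i)}
        = (fun ω => (Ucum X n ω, Ucum X (n+1) ω)) ⁻¹'
          {p : ℕ × ℕ | p.1 ≤ k ∧ k < p.2 ∧ k - p.1 = i} := by
      ext ω
      simp only [Set.mem_setOf_eq, Set.mem_preimage]
      exact pos_eq_real_iff (hXrec := hXrec) hni
    rw [this]
    exact Measurable.prod (meas_U hmξ hmξ' hmd hX0 hXrec n)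
      (meas_U' hmξ hmξ' hmd hX0 hXrec n) ((Set.to_countable _).measurableSet)

include hmξ hmξ' hmd hX0 hXrec in
lemma cell_meas_global (k n i : ℕ) :
    MeasurableSet {ω | posOf X k ω = (n, i)} :=
  Halg_le hmξ hmξ' hmd n _ (cell_meas hmξ hmξ' hmd hX0 hXrec k n i)

include hmξ hmξ' hmd hX0 hXrec in
lemma meas_pos (k : ℕ) : Measurable (posOf X k) := by
  apply measurable_to_countable' (α := ℕ × ℕ)
  rintro ⟨n, i⟩
  exact cell_meas_global hmξ hmξ' hmd hX0 hXrec k n i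

/-- the observed pair (observation indicator, offspring count) at global slot k -/
noncomputable def vfun (ξ ξ' d : ℕ → ℕ → Ω → ℕ) (X : ℕ → Ω → ℕ) (k : ℕ) :
    Ω → ℕ × ℕ := fun ω =>
  (d (posOf X k ω).1 (posOf X k ω).2 ω, ecomb ξ ξ' d (posOf X k ω).1 (posOf X k ω).2 ω)

/-- the event that the slot variables at (n,i) take value b -/
def Bset (ξ ξ' d : ℕ → ℕ → Ω → ℕ) (n i : ℕ) (b : ℕ × ℕ) : Set Ω :=
  {ω | d n i ω = b.1 ∧ ecomb ξ ξ' d n i ω = b.2}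

include hmξ hmξ' hmd hX0 hXrec in
lemma meas_vfun (k : ℕ) : Measurable (vfun ξ ξ' d X k) := by
  have h1 : Measurable (fun ω => (ω, posOf X k ω)) :=
    Measurable.prod measurable_id (meas_pos hmξ hmξ' hmd hX0 hXrec k)
  have h2 : Measurable (fun pr : Ω × (ℕ × ℕ) =>
      (d pr.2.1 pr.2.2 pr.1, ecomb ξ ξ' d pr.2.1 pr.2.2 pr.1)) := by
    apply measurable_from_prod_countable_left
    rintro ⟨n, i⟩
    exact Measurable.prod (hmd n i)
      ((meas_K_e n i).mono (Kalg_le hmξ hmξ' hmd n i) le_rfl)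
  exact h2.comp h1

lemma meas_Bset_K (n i : ℕ) (b : ℕ × ℕ) :
    MeasurableSet[Kalg ξ ξ' d n i] (Bset ξ ξ' d n i b) := by
  have : Bset ξ ξ' d n i b
      = (d n i) ⁻¹' {b.1} ∩ (ecomb ξ ξ' d n i) ⁻¹' {b.2} := by
    ext ω; simp [Bset]
  rw [this]
  exact ((meas_K_d n i) (MeasurableSet.singleton b.1)).inter
    ((meas_K_e n i) (MeasurableSet.singleton b.2))

end Meas

section Prob

variable [MeasurableSpace Ω] {μ : Measure Ω} [IsProbabilityMeasure μ]
variable {ξ ξ' d : ℕ → ℕ → Ω → ℕ} {X Z : ℕ → Ω → ℕ} {π : ℝ}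
variable (hmξ : ∀ n i, Measurable (ξ n i)) (hmξ' : ∀ n i, Measurable (ξ' n i))
  (hmd : ∀ n i, Measurable (d n i))
variable (hX0 : ∀ ω, X 0 ω = 1)
variable (hXrec : ∀ n ω, X (n + 1) ω =
      ∑ i ∈ Finset.range (X n ω), (ξ n i ω * (1 - d n i ω) + ξ' n i ω * d n i ω))
variable (hind : iIndepFun (fam ξ ξ' d) μ)
variable (hd01 : ∀ n i ω, d n i ω ≤ 1)
variable (hdBer : ∀ n i, μ {ω | d n i ω = 1} = ENNReal.ofReal π)
variable (hiid : ∀ n i, μ.map (ξ n i) = μ.map (ξ 0 0))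
variable (hiid' : ∀ n i, μ.map (ξ' n i) = μ.map (ξ' 0 0))

/-- the common law of a slot pair, as a function of the point -/
noncomputable def qval (μ : Measure Ω) (ξ ξ' : ℕ → ℕ → Ω → ℕ) (π : ℝ) (b : ℕ × ℕ) :
    ℝ≥0∞ :=
  if b.1 = 0 then (1 - ENNReal.ofReal π) * μ {ω | ξ 0 0 ω = b.2}
  else if b.1 = 1 then ENNReal.ofReal π * μ {ω | ξ' 0 0 ω = b.2} else 0

include hind in
lemma hiI : iIndep (calg ξ ξ' d) μ := (iIndepFun_iff_iIndep _ _ _).mp hind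

include hmξ hmξ' hmd hind in
lemma indep_H_bundle (n : ℕ) (S : Set Coord) (hS : ∀ c ∈ S, n ≤ crow c) :
    Indep (Halg ξ ξ' d n) (⨆ c ∈ S, calg ξ ξ' d c) μ := by
  apply indep_iSup_of_disjoint (calg_le hmξ hmξ' hmd) (hiI hind)
  rw [Set.disjoint_left]
  intro c hc hcS
  have := hS c hcS
  simp only [Set.mem_setOf_eq] at hc
  omega

lemma indep_mul {M1 M2 : MeasurableSpace Ω} (h : Indep M1 M2 μ) {s t : Set Ω}
    (hs : MeasurableSet[M1] s) (ht : MeasurableSet[M2] t) : μ (s ∩ t) = μ s * μ t :=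
  ((Indep_iff _ _ _).mp h) s t hs ht

lemma triple_row {n i : ℕ} : ∀ c ∈ triple n i, crow c = n := by
  rintro c (h | h | h) <;> subst h <;> rfl

include hmξ hmξ' hmd hind in
lemma indep_H_K (n i : ℕ) : Indep (Halg ξ ξ' d n) (Kalg ξ ξ' d n i) μ :=
  indep_H_bundle hmξ hmξ' hmd hind n (triple n i)
    (fun c hc => le_of_eq (triple_row c hc).symm)

include hmξ hmξ' hmd hind in
lemma indep_H_KK (n i i' : ℕ) :
    Indep (Halg ξ ξ' d n) (Kalg ξ ξ' d n i ⊔ Kalg ξ ξ' d n i') μ := by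
  have h := indep_H_bundle hmξ hmξ' hmd hind n (triple n i ∪ triple n i')
    (by rintro c (hc | hc) <;> exact le_of_eq (triple_row c hc).symm)
  rwa [iSup_union] at h

include hmξ hmξ' hmd hind in
lemma indep_K_K {n i i' : ℕ} (h : i ≠ i') :
    Indep (Kalg ξ ξ' d n i) (Kalg ξ ξ' d n i') μ := by
  apply indep_iSup_of_disjoint (calg_le hmξ hmξ' hmd) (hiI hind)
  rw [Set.disjoint_left]
  rintro c (hc | hc | hc) <;> subst hc <;>
    rintro (hc' | hc' | hc') <;> simp_all [triple]

include hmd hd01 hdBer in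
lemma d_law_zero (n i : ℕ) : μ {ω | d n i ω = 0} = 1 - ENNReal.ofReal π := by
  have hcompl : {ω | d n i ω = 0} = {ω | d n i ω = 1}ᶜ := by
    ext ω
    have := hd01 n i ω
    simp only [Set.mem_setOf_eq, Set.mem_compl_iff]
    omega
  have hms : MeasurableSet {ω | d n i ω = 1} := hmd n i (MeasurableSet.singleton 1)
  rw [hcompl, measure_compl hms (measure_ne_top μ _), measure_univ, hdBer n i]

include hmξ hiid in
lemma ξ_law (n i : ℕ) (a : ℕ) : μ {ω | ξ n i ω = a} = μ {ω | ξ 0 0 ω = a} := by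
  have h1 : μ {ω | ξ n i ω = a} = μ.map (ξ n i) {a} := by
    rw [Measure.map_apply (hmξ n i) (MeasurableSet.singleton a)]
    rfl
  have h2 : μ {ω | ξ 0 0 ω = a} = μ.map (ξ 0 0) {a} := by
    rw [Measure.map_apply (hmξ 0 0) (MeasurableSet.singleton a)]
    rfl
  rw [h1, h2, hiid n i]

include hmξ' hiid' in
lemma ξ'_law (n i : ℕ) (a : ℕ) : μ {ω | ξ' n i ω = a} = μ {ω | ξ' 0 0 ω = a} := by
  have h1 : μ {ω | ξ' n i ω = a} = μ.map (ξ' n i) {a} := by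
    rw [Measure.map_apply (hmξ' n i) (MeasurableSet.singleton a)]
    rfl
  have h2 : μ {ω | ξ' 0 0 ω = a} = μ.map (ξ' 0 0) {a} := by
    rw [Measure.map_apply (hmξ' 0 0) (MeasurableSet.singleton a)]
    rfl
  rw [h1, h2, hiid' n i]

lemma meas_comap_pre {f : Ω → ℕ} (s : Set ℕ) :
    MeasurableSet[MeasurableSpace.comap f inferInstance] (f ⁻¹' s) :=
  ⟨s, trivial, rfl⟩

include hmξ hmξ' hmd hind hd01 hdBer hiid hiid' in
lemma pairLaw (n i : ℕ) (b : ℕ × ℕ) :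
    μ (Bset ξ ξ' d n i b) = qval μ ξ ξ' π b := by
  obtain ⟨b1, b2⟩ := b
  unfold qval
  rcases Nat.lt_or_ge b1 2 with hb | hb
  · interval_cases b1
    · -- b1 = 0 : event = {d = 0} ∩ {ξ = b2}
      have hset : Bset ξ ξ' d n i (0, b2)
          = (d n i) ⁻¹' {0} ∩ (ξ n i) ⁻¹' {b2} := by
        ext ω
        simp only [Bset, Set.mem_setOf_eq, Set.mem_inter_iff, Set.mem_preimage,
          Set.mem_singleton_iff, ecomb]
        constructor
        · rintro ⟨h1, h2⟩
          refine ⟨h1, ?_⟩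
          rw [h1] at h2; simpa using h2
        · rintro ⟨h1, h2⟩
          refine ⟨h1, ?_⟩
          rw [h1, h2]; simp
      rw [hset]
      have hindep : Indep (calg ξ ξ' d (Sum.inr (Sum.inr (n,i))))
          (calg ξ ξ' d (Sum.inl (n,i))) μ := (hiI hind).indep (by simp)
      rw [show μ ((d n i) ⁻¹' {0} ∩ (ξ n i) ⁻¹' {b2})
          = μ ((d n i) ⁻¹' {0}) * μ ((ξ n i) ⁻¹' {b2}) from
        indep_mul hindep ⟨{0}, trivial, rfl⟩ ⟨{b2}, trivial, rfl⟩]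
      have e1 : (d n i) ⁻¹' {0} = {ω | d n i ω = 0} := rfl
      have e2 : (ξ n i) ⁻¹' {b2} = {ω | ξ n i ω = b2} := rfl
      rw [e1, e2, d_law_zero hmd hd01 hdBer n i, ξ_law hmξ hiid n i b2]
      simp
    · -- b1 = 1 : event = {d = 1} ∩ {ξ' = b2}
      have hset : Bset ξ ξ' d n i (1, b2)
          = (d n i) ⁻¹' {1} ∩ (ξ' n i) ⁻¹' {b2} := by
        ext ω
        simp only [Bset, Set.mem_setOf_eq, Set.mem_inter_iff, Set.mem_preimage,
          Set.mem_singleton_iff, ecomb]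
        constructor
        · rintro ⟨h1, h2⟩
          refine ⟨h1, ?_⟩
          rw [h1] at h2; simpa using h2
        · rintro ⟨h1, h2⟩
          refine ⟨h1, ?_⟩
          rw [h1, h2]; simp
      rw [hset]
      have hindep : Indep (calg ξ ξ' d (Sum.inr (Sum.inr (n,i))))
          (calg ξ ξ' d (Sum.inr (Sum.inl (n,i)))) μ := (hiI hind).indep (by simp)
      rw [show μ ((d n i) ⁻¹' {1} ∩ (ξ' n i) ⁻¹' {b2})
          = μ ((d n i) ⁻¹' {1}) * μ ((ξ' n i) ⁻¹' {b2}) from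
        indep_mul hindep ⟨{1}, trivial, rfl⟩ ⟨{b2}, trivial, rfl⟩]
      have e1 : (d n i) ⁻¹' {1} = {ω | d n i ω = 1} := rfl
      have e2 : (ξ' n i) ⁻¹' {b2} = {ω | ξ' n i ω = b2} := rfl
      rw [e1, e2, hdBer n i, ξ'_law hmξ' hiid' n i b2]
      simp
  · -- b1 ≥ 2 : empty
    have hset : Bset ξ ξ' d n i (b1, b2) = ∅ := by
      ext ω
      simp only [Bset, Set.mem_setOf_eq, Set.mem_empty_iff_false, iff_false, not_and]
      intro h1
      have := hd01 n i ω
      omega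
    rw [hset]
    have h1 : ¬ b1 = 0 := by omega
    have h2 : ¬ b1 = 1 := by omega
    simp [h1, h2]

/-- generic finite partition of a measure by the values of a function -/
lemma decomp_fin {γ : Type*} [MeasurableSpace γ] [MeasurableSingletonClass γ]
    {F : Ω → γ} (hF : Measurable F) (s : Finset γ) (hs : ∀ ω, F ω ∈ s)
    {A : Set Ω} (hA : MeasurableSet A) :
    μ A = ∑ y ∈ s, μ (A ∩ {ω | F ω = y}) := by
  have hU : A = ⋃ y ∈ s, A ∩ {ω | F ω = y} := by
    ext ω
    simp only [Set.mem_iUnion, Set.mem_inter_iff, Set.mem_setOf_eq]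
    constructor
    · intro h; exact ⟨F ω, hs ω, h, rfl⟩
    · rintro ⟨y, hy, h, _⟩; exact h
  conv_lhs => rw [hU]
  apply measure_biUnion_finset
  · intro y _ y' _ hyy'
    apply Set.disjoint_left.mpr
    rintro ω ⟨_, h1⟩ ⟨_, h2⟩
    simp only [Set.mem_setOf_eq] at h1 h2
    exact hyy' (h1 ▸ h2 ▸ rfl)
  · intro y _
    exact hA.inter (hF (MeasurableSet.singleton y))

section Cells

include hmξ hmξ' hmd hX0 hXrec in
lemma sum_cells (k : ℕ) :
    ∑ p ∈ Finset.range (k+1) ×ˢ Finset.range (k+2), μ {ω | posOf X k ω = p} = 1 := by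
  have hmem : ∀ ω, posOf X k ω ∈ Finset.range (k+1) ×ˢ Finset.range (k+2) := by
    intro ω
    have := pos_mem (hXrec := hXrec) (ω := ω) k
    rw [Finset.mem_product, Finset.mem_range, Finset.mem_range]
    omega
  have hdec := decomp_fin (μ := μ) (meas_pos hmξ hmξ' hmd hX0 hXrec k)
    (Finset.range (k+1) ×ˢ Finset.range (k+2)) hmem MeasurableSet.univ
  simp only [Set.univ_inter, measure_univ] at hdec
  exact hdec.symm

include hmξ hmξ' hmd hX0 hXrec hind hd01 hdBer hiid hiid' in
lemma vlaw (k : ℕ) (b : ℕ × ℕ) :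
    μ (vfun ξ ξ' d X k ⁻¹' {b}) = qval μ ξ ξ' π b := by
  have hmem : ∀ ω, posOf X k ω ∈ Finset.range (k+1) ×ˢ Finset.range (k+2) := by
    intro ω
    have := pos_mem (hXrec := hXrec) (ω := ω) k
    rw [Finset.mem_product, Finset.mem_range, Finset.mem_range]
    omega
  have hA : MeasurableSet (vfun ξ ξ' d X k ⁻¹' {b}) :=
    meas_vfun hmξ hmξ' hmd hX0 hXrec k (MeasurableSet.singleton b)
  have hdec := decomp_fin (μ := μ) (meas_pos hmξ hmξ' hmd hX0 hXrec k)
    (Finset.range (k+1) ×ˢ Finset.range (k+2)) hmem hA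
  have hterm : ∀ p ∈ Finset.range (k+1) ×ˢ Finset.range (k+2),
      μ (vfun ξ ξ' d X k ⁻¹' {b} ∩ {ω | posOf X k ω = p})
        = μ {ω | posOf X k ω = p} * qval μ ξ ξ' π b := by
    rintro ⟨n, i⟩ _
    have hAe : vfun ξ ξ' d X k ⁻¹' {b} ∩ {ω | posOf X k ω = (n, i)}
        = {ω | posOf X k ω = (n, i)} ∩ Bset ξ ξ' d n i b := by
      ext ω
      simp only [Set.mem_inter_iff, Set.mem_preimage, Set.mem_singleton_iff,
        Set.mem_setOf_eq, vfun, Bset]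
      constructor
      · rintro ⟨h1, h2⟩
        rw [h2] at h1
        have h1' := Prod.ext_iff.mp h1
        exact ⟨h2, by simpa using h1'.1, by simpa using h1'.2⟩
      · rintro ⟨h2, h3, h4⟩
        rw [h2]
        exact ⟨Prod.ext_iff.mpr ⟨by simpa using h3, by simpa using h4⟩, rfl⟩
    rw [hAe, indep_mul (indep_H_K hmξ hmξ' hmd hind n i)
      (cell_meas hmξ hmξ' hmd hX0 hXrec k n i) (meas_Bset_K n i b),
      pairLaw hmξ hmξ' hmd hind hd01 hdBer hiid hiid' n i b]
  rw [hdec, Finset.sum_congr rfl hterm, ← Finset.sum_mul,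
    sum_cells hmξ hmξ' hmd hX0 hXrec k, one_mul]

include hmξ hmξ' hmd hX0 hXrec hind hd01 hdBer hiid hiid' in
lemma vpairLaw {j k : ℕ} (hjk : j < k) (b c : ℕ × ℕ) :
    μ (vfun ξ ξ' d X j ⁻¹' {b} ∩ vfun ξ ξ' d X k ⁻¹' {c})
      = qval μ ξ ξ' π b * qval μ ξ ξ' π c := by
  set Pj := Finset.range (j+1) ×ˢ Finset.range (j+2) with hPj
  set Pk := Finset.range (k+1) ×ˢ Finset.range (k+2) with hPk
  have hF : Measurable (fun ω => (posOf X j ω, posOf X k ω)) :=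
    Measurable.prod (meas_pos hmξ hmξ' hmd hX0 hXrec j)
      (meas_pos hmξ hmξ' hmd hX0 hXrec k)
  have hmem : ∀ ω, (posOf X j ω, posOf X k ω) ∈ Pj ×ˢ Pk := by
    intro ω
    have h1 := pos_mem (hXrec := hXrec) (ω := ω) j
    have h2 := pos_mem (hXrec := hXrec) (ω := ω) k
    rw [Finset.mem_product, hPj, hPk, Finset.mem_product, Finset.mem_product]
    simp only [Finset.mem_range]
    omega
  have hAj : MeasurableSet (vfun ξ ξ' d X j ⁻¹' {b}) :=
    meas_vfun hmξ hmξ' hmd hX0 hXrec j (MeasurableSet.singleton b)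
  have hAk : MeasurableSet (vfun ξ ξ' d X k ⁻¹' {c}) :=
    meas_vfun hmξ hmξ' hmd hX0 hXrec k (MeasurableSet.singleton c)
  -- key per-cell identity
  have hterm : ∀ pq ∈ Pj ×ˢ Pk,
      μ ((vfun ξ ξ' d X j ⁻¹' {b} ∩ vfun ξ ξ' d X k ⁻¹' {c})
          ∩ {ω | (posOf X j ω, posOf X k ω) = pq})
        = qval μ ξ ξ' π c
          * μ (vfun ξ ξ' d X j ⁻¹' {b} ∩ {ω | (posOf X j ω, posOf X k ω) = pq}) := by
    rintro ⟨⟨n', i'⟩, ⟨n, i⟩⟩ _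
    set CC : Set Ω := {ω | posOf X j ω = (n', i')} ∩ {ω | posOf X k ω = (n, i)} with hCC
    have hcellE : {ω | (posOf X j ω, posOf X k ω) = ((n', i'), (n, i))} = CC := by
      ext ω
      simp only [hCC, Set.mem_setOf_eq, Set.mem_inter_iff, Prod.ext_iff]
    have hE1 : (vfun ξ ξ' d X j ⁻¹' {b} ∩ vfun ξ ξ' d X k ⁻¹' {c})
        ∩ {ω | (posOf X j ω, posOf X k ω) = ((n', i'), (n, i))}
        = (CC ∩ Bset ξ ξ' d n' i' b) ∩ Bset ξ ξ' d n i c := by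
      rw [hcellE]
      ext ω
      simp only [hCC, Set.mem_inter_iff, Set.mem_preimage, Set.mem_singleton_iff,
        Set.mem_setOf_eq, vfun, Bset]
      constructor
      · rintro ⟨⟨h1, h2⟩, h3, h4⟩
        rw [h3] at h1
        rw [h4] at h2
        have h1' := Prod.ext_iff.mp h1
        have h2' := Prod.ext_iff.mp h2
        exact ⟨⟨⟨h3, h4⟩, by simpa using h1'.1, by simpa using h1'.2⟩,
          by simpa using h2'.1, by simpa using h2'.2⟩
      · rintro ⟨⟨⟨h3, h4⟩, h5, h6⟩, h7, h8⟩
        rw [h3, h4]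
        exact ⟨⟨Prod.ext_iff.mpr ⟨by simpa using h5, by simpa using h6⟩,
          Prod.ext_iff.mpr ⟨by simpa using h7, by simpa using h8⟩⟩, rfl, rfl⟩
    have hE2 : vfun ξ ξ' d X j ⁻¹' {b}
        ∩ {ω | (posOf X j ω, posOf X k ω) = ((n', i'), (n, i))}
        = CC ∩ Bset ξ ξ' d n' i' b := by
      rw [hcellE]
      ext ω
      simp only [hCC, Set.mem_inter_iff, Set.mem_preimage, Set.mem_singleton_iff,
        Set.mem_setOf_eq, vfun, Bset]
      constructor
      · rintro ⟨h1, h3, h4⟩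
        rw [h3] at h1
        have h1' := Prod.ext_iff.mp h1
        exact ⟨⟨h3, h4⟩, by simpa using h1'.1, by simpa using h1'.2⟩
      · rintro ⟨⟨h3, h4⟩, h5, h6⟩
        rw [h3]
        exact ⟨Prod.ext_iff.mpr ⟨by simpa using h5, by simpa using h6⟩, rfl, h4⟩
    rw [hE1, hE2]
    rcases Nat.lt_trichotomy n' n with hlt | heqn | hgt
    · -- n' < n
      have hs1 : MeasurableSet[Halg ξ ξ' d n] (CC ∩ Bset ξ ξ' d n' i' b) := by
        apply MeasurableSet.inter
        · exact MeasurableSet.inter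
            (Halg_mono (by omega) _ (cell_meas hmξ hmξ' hmd hX0 hXrec j n' i'))
            (cell_meas hmξ hmξ' hmd hX0 hXrec k n i)
        · exact Kalg_le_Halg i' hlt _ (meas_Bset_K n' i' b)
      rw [indep_mul (indep_H_K hmξ hmξ' hmd hind n i) hs1 (meas_Bset_K n i c),
        pairLaw hmξ hmξ' hmd hind hd01 hdBer hiid hiid' n i c, mul_comm]
    · -- n' = n
      subst heqn
      by_cases hii : i' = i
      · -- same cell: empty
        subst hii
        have hCCe : CC = ∅ := by
          ext ω
          simp only [hCC, Set.mem_inter_iff, Set.mem_setOf_eq, Set.mem_empty_iff_false,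
            iff_false, not_and]
          intro h1 h2
          have := (pos_order (hXrec := hXrec) (ω := ω) hjk).2
          rw [h1, h2] at this
          exact this rfl
        rw [hCCe]
        simp
      · -- same row, different columns
        have hCCm : MeasurableSet[Halg ξ ξ' d n'] CC :=
          MeasurableSet.inter (cell_meas hmξ hmξ' hmd hX0 hXrec j n' i')
            (cell_meas hmξ hmξ' hmd hX0 hXrec k n' i)
        have h1 : μ ((CC ∩ Bset ξ ξ' d n' i' b) ∩ Bset ξ ξ' d n' i c)
            = μ CC * (μ (Bset ξ ξ' d n' i' b) * μ (Bset ξ ξ' d n' i c)) := by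
          rw [Set.inter_assoc]
          rw [indep_mul (indep_H_KK hmξ hmξ' hmd hind n' i' i) hCCm
            (MeasurableSet.inter
              (le_sup_left (a := Kalg ξ ξ' d n' i') (b := Kalg ξ ξ' d n' i) _
                (meas_Bset_K n' i' b))
              (le_sup_right (a := Kalg ξ ξ' d n' i') (b := Kalg ξ ξ' d n' i) _
                (meas_Bset_K n' i c)))]
          rw [indep_mul (indep_K_K hmξ hmξ' hmd hind hii) (meas_Bset_K n' i' b)
            (meas_Bset_K n' i c)]
        have h2 : μ (CC ∩ Bset ξ ξ' d n' i' b) = μ CC * μ (Bset ξ ξ' d n' i' b) :=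
          indep_mul (indep_H_K hmξ hmξ' hmd hind n' i') hCCm (meas_Bset_K n' i' b)
        rw [h1, h2, pairLaw hmξ hmξ' hmd hind hd01 hdBer hiid hiid' n' i c]
        ring
    · -- n' > n : impossible, cell empty
      have hCCe : CC = ∅ := by
        ext ω
        simp only [hCC, Set.mem_inter_iff, Set.mem_setOf_eq, Set.mem_empty_iff_false,
          iff_false, not_and]
        intro h1 h2
        have := (pos_order (hXrec := hXrec) (ω := ω) hjk).1
        rw [h1, h2] at this
        simp only at this
        omega
      rw [hCCe]
      simp
  have hdec := decomp_fin (μ := μ) hF (Pj ×ˢ Pk) hmem (hAj.inter hAk)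
  have hdec2 := decomp_fin (μ := μ) hF (Pj ×ˢ Pk) hmem hAj
  rw [hdec, Finset.sum_congr rfl hterm, ← Finset.mul_sum, ← hdec2,
    vlaw hmξ hmξ' hmd hX0 hXrec hind hd01 hdBer hiid hiid' j b, mul_comm]

end Cells

section Glue

lemma meas_preimage_tsum {γ : Type*} [MeasurableSpace γ] [Countable γ]
    [MeasurableSingletonClass γ] {f : Ω → γ} (hf : Measurable f) (s : Set γ) :
    μ (f ⁻¹' s) = ∑' a : s, μ (f ⁻¹' {(a : γ)}) := by
  have hU : f ⁻¹' s = ⋃ a : s, f ⁻¹' {(a : γ)} := by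
    ext ω
    simp only [Set.mem_preimage, Set.mem_iUnion]
    constructor
    · intro h; exact ⟨⟨f ω, h⟩, rfl⟩
    · rintro ⟨a, ha⟩; simp only [Set.mem_singleton_iff] at ha; rw [ha]; exact a.2
  rw [hU]
  apply measure_iUnion
  · intro a b hab
    apply Set.disjoint_left.mpr
    intro ω h1 h2
    simp only [Set.mem_preimage, Set.mem_singleton_iff] at h1 h2
    exact hab (Subtype.ext (h1 ▸ h2 ▸ rfl))
  · intro a; exact hf (MeasurableSet.singleton _)

lemma indepFun_of_singleton {γ : Type*} [MeasurableSpace γ] [Countable γ]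
    [MeasurableSingletonClass γ] {f g : Ω → γ} (hf : Measurable f) (hg : Measurable g)
    (h : ∀ a b : γ, μ (f ⁻¹' {a} ∩ g ⁻¹' {b}) = μ (f ⁻¹' {a}) * μ (g ⁻¹' {b})) :
    IndepFun f g μ := by
  rw [indepFun_iff_measure_inter_preimage_eq_mul]
  intro s t _ _
  have hU : f ⁻¹' s ∩ g ⁻¹' t
      = ⋃ p : s × t, (f ⁻¹' {(p.1 : γ)} ∩ g ⁻¹' {(p.2 : γ)}) := by
    ext ω
    simp only [Set.mem_inter_iff, Set.mem_preimage, Set.mem_iUnion]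
    constructor
    · rintro ⟨h1, h2⟩; exact ⟨(⟨f ω, h1⟩, ⟨g ω, h2⟩), rfl, rfl⟩
    · rintro ⟨⟨a, b⟩, h1, h2⟩
      simp only [Set.mem_singleton_iff] at h1 h2
      rw [h1, h2]; exact ⟨a.2, b.2⟩
  rw [hU, measure_iUnion]
  · have : ∀ p : s × t, μ (f ⁻¹' {(p.1 : γ)} ∩ g ⁻¹' {(p.2 : γ)})
        = μ (f ⁻¹' {(p.1 : γ)}) * μ (g ⁻¹' {(p.2 : γ)}) := fun p => h p.1 p.2
    rw [tsum_congr this, ENNReal.tsum_prod (f := fun (a : s) (b : t) => μ (f ⁻¹' {(a : γ)}) * μ (g ⁻¹' {(b : γ)}))]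
    have : ∀ a : s, ∑' b : t, μ (f ⁻¹' {(a : γ)}) * μ (g ⁻¹' {(b : γ)})
        = μ (f ⁻¹' {(a : γ)}) * ∑' b : t, μ (g ⁻¹' {(b : γ)}) := fun a =>
      ENNReal.tsum_mul_left
    rw [tsum_congr this, ENNReal.tsum_mul_right, ← meas_preimage_tsum hf s,
      ← meas_preimage_tsum hg t]
  · rintro ⟨a, b⟩ ⟨a', b'⟩ hab
    apply Set.disjoint_left.mpr
    rintro ω ⟨h1, h2⟩ ⟨h3, h4⟩
    simp only [Set.mem_preimage, Set.mem_singleton_iff] at h1 h2 h3 h4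
    apply hab
    have e1 : a = a' := Subtype.ext (h1 ▸ h3 ▸ rfl)
    have e2 : b = b' := Subtype.ext (h2 ▸ h4 ▸ rfl)
    rw [e1, e2]
  · rintro ⟨a, b⟩
    exact (hf (MeasurableSet.singleton _)).inter (hg (MeasurableSet.singleton _))

lemma identDistrib_of_singleton {γ : Type*} [MeasurableSpace γ] [Countable γ]
    [MeasurableSingletonClass γ] {f g : Ω → γ} (hf : Measurable f) (hg : Measurable g)
    (h : ∀ a : γ, μ (f ⁻¹' {a}) = μ (g ⁻¹' {a})) : IdentDistrib f g μ μ := by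
  refine ⟨hf.aemeasurable, hg.aemeasurable, ?_⟩
  ext s hs
  rw [Measure.map_apply hf hs, Measure.map_apply hg hs,
    meas_preimage_tsum hf s, meas_preimage_tsum hg s]
  exact tsum_congr fun a => h a

end Glue

section SLLN

include hX0 hXrec in
lemma vfun_zero : vfun ξ ξ' d X 0 = fun ω => (d 0 0 ω, ecomb ξ ξ' d 0 0 ω) := by
  funext ω
  have hpos : posOf X 0 ω = (0, 0) := by
    have h2 : (0:ℕ) < Ucum X 1 ω := by
      have : Ucum X 1 ω = X 0 ω := by simp [Ucum]
      rw [this, hX0]; omega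
    have := pos_slot hXrec (ω := ω) (n := 0) (k := 0) (by simp [Ucum]) h2
    simpa [Ucum] using this
  simp [vfun, hpos]

include hmξ hmξ' hmd hX0 hXrec hind hd01 hdBer hiid hiid' in
lemma hIndepV {j k : ℕ} (hjk : j ≠ k) :
    IndepFun (vfun ξ ξ' d X j) (vfun ξ ξ' d X k) μ := by
  rcases Nat.lt_or_ge j k with h | h
  · apply indepFun_of_singleton (meas_vfun hmξ hmξ' hmd hX0 hXrec j)
      (meas_vfun hmξ hmξ' hmd hX0 hXrec k)
    intro a b
    rw [vpairLaw hmξ hmξ' hmd hX0 hXrec hind hd01 hdBer hiid hiid' h a b,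
      vlaw hmξ hmξ' hmd hX0 hXrec hind hd01 hdBer hiid hiid' j a,
      vlaw hmξ hmξ' hmd hX0 hXrec hind hd01 hdBer hiid hiid' k b]
  · have hkj : k < j := by omega
    apply IndepFun.symm
    apply indepFun_of_singleton (meas_vfun hmξ hmξ' hmd hX0 hXrec k)
      (meas_vfun hmξ hmξ' hmd hX0 hXrec j)
    intro a b
    rw [vpairLaw hmξ hmξ' hmd hX0 hXrec hind hd01 hdBer hiid hiid' hkj a b,
      vlaw hmξ hmξ' hmd hX0 hXrec hind hd01 hdBer hiid hiid' k a,
      vlaw hmξ hmξ' hmd hX0 hXrec hind hd01 hdBer hiid hiid' j b]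

include hmξ hmξ' hmd hX0 hXrec hind hd01 hdBer hiid hiid' in
lemma hIdentV (k : ℕ) :
    IdentDistrib (vfun ξ ξ' d X k) (vfun ξ ξ' d X 0) μ μ := by
  apply identDistrib_of_singleton (meas_vfun hmξ hmξ' hmd hX0 hXrec k)
    (meas_vfun hmξ hmξ' hmd hX0 hXrec 0)
  intro a
  rw [vlaw hmξ hmξ' hmd hX0 hXrec hind hd01 hdBer hiid hiid' k a,
    vlaw hmξ hmξ' hmd hX0 hXrec hind hd01 hdBer hiid hiid' 0 a]

include hmd hd01 in
lemma int_d : Integrable (fun ω => (d 0 0 ω : ℝ)) μ := by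
  apply Integrable.mono' (integrable_const (1:ℝ))
    (((measurable_of_countable (fun n : ℕ => (n:ℝ))).comp (hmd 0 0)).aestronglyMeasurable)
  apply Filter.Eventually.of_forall
  intro ω
  simp only [Function.comp_apply]
  rw [Real.norm_eq_abs, abs_of_nonneg (Nat.cast_nonneg _)]
  exact_mod_cast hd01 0 0 ω

include hmd hd01 hdBer in
lemma mean_d (hπ0 : 0 ≤ π) : ∫ ω, (d 0 0 ω : ℝ) ∂μ = π := by
  have e : (fun ω => (d 0 0 ω : ℝ))
      = Set.indicator {ω | d 0 0 ω = 1} (fun _ => (1:ℝ)) := by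
    funext ω
    by_cases h : d 0 0 ω = 1
    · simp [Set.indicator_apply, Set.mem_setOf_eq, h]
    · have h0 : d 0 0 ω = 0 := by have := hd01 0 0 ω; omega
      simp [Set.indicator_apply, Set.mem_setOf_eq, h, h0]
  rw [e, integral_indicator_const (1:ℝ)
    (show MeasurableSet {ω | d 0 0 ω = 1} from hmd 0 0 (MeasurableSet.singleton 1))]
  rw [measureReal_def, hdBer 0 0, ENNReal.toReal_ofReal hπ0]
  simp

include hmξ hmξ' hmd hd01 in
lemma int_e (hmom4 : MemLp (fun ω => (ξ 0 0 ω : ℝ)) 4 μ)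
    (hmom4' : MemLp (fun ω => (ξ' 0 0 ω : ℝ)) 4 μ) :
    Integrable (fun ω => (ecomb ξ ξ' d 0 0 ω : ℝ)) μ := by
  have intξ : Integrable (fun ω => (ξ 0 0 ω : ℝ)) μ := hmom4.integrable (by norm_num)
  have intξ' : Integrable (fun ω => (ξ' 0 0 ω : ℝ)) μ := hmom4'.integrable (by norm_num)
  apply Integrable.mono' (intξ.add intξ')
    (((measurable_of_countable (fun n : ℕ => (n:ℝ))).comp
      ((meas_K_e 0 0).mono (Kalg_le hmξ hmξ' hmd 0 0) le_rfl)).aestronglyMeasurable)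
  apply Filter.Eventually.of_forall
  intro ω
  simp only [Function.comp_apply, Pi.add_apply]
  rw [Real.norm_eq_abs, abs_of_nonneg (Nat.cast_nonneg _)]
  have hb : ecomb ξ ξ' d 0 0 ω ≤ ξ 0 0 ω + ξ' 0 0 ω := by
    have := hd01 0 0 ω
    unfold ecomb
    rcases Nat.le_one_iff_eq_zero_or_eq_one.mp this with h | h <;> rw [h] <;> simp
  exact_mod_cast hb

include hmξ hmξ' hmd hind hd01 hdBer in
lemma mean_e (hπ0 : 0 ≤ π) {mp mm m : ℝ}
    (hmom4 : MemLp (fun ω => (ξ 0 0 ω : ℝ)) 4 μ)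
    (hmom4' : MemLp (fun ω => (ξ' 0 0 ω : ℝ)) 4 μ)
    (hmp : mp = ∫ ω, (ξ 0 0 ω : ℝ) ∂μ)
    (hmm : mm = ∫ ω, (ξ' 0 0 ω : ℝ) ∂μ)
    (hm : m = π * mm + (1 - π) * mp) :
    ∫ ω, (ecomb ξ ξ' d 0 0 ω : ℝ) ∂μ = m := by
  have intξ : Integrable (fun ω => (ξ 0 0 ω : ℝ)) μ := hmom4.integrable (by norm_num)
  have intξ' : Integrable (fun ω => (ξ' 0 0 ω : ℝ)) μ := hmom4'.integrable (by norm_num)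
  have intd' : Integrable (fun ω => (d 0 0 ω : ℝ)) μ := int_d hmd hd01
  have int1d : Integrable (fun ω => 1 - (d 0 0 ω : ℝ)) μ := (integrable_const 1).sub intd'
  have hptw : ∀ ω, (ecomb ξ ξ' d 0 0 ω : ℝ)
      = (ξ 0 0 ω : ℝ) * (1 - (d 0 0 ω : ℝ)) + (ξ' 0 0 ω : ℝ) * (d 0 0 ω : ℝ) := by
    intro ω
    have := hd01 0 0 ω
    rcases Nat.le_one_iff_eq_zero_or_eq_one.mp this with h | h <;>
      simp [ecomb, h] <;> push_cast <;> ring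
  have hi1 : IndepFun (fun ω => (ξ 0 0 ω : ℝ)) (fun ω => 1 - (d 0 0 ω : ℝ)) μ := by
    have hbase : IndepFun (ξ 0 0) (d 0 0) μ :=
      hind.indepFun (show (Sum.inl (0,0) : Coord) ≠ Sum.inr (Sum.inr (0,0)) by simp)
    exact hbase.comp (measurable_of_countable (fun n : ℕ => (n:ℝ)))
      (measurable_of_countable (fun n : ℕ => 1 - (n:ℝ)))
  have hi2 : IndepFun (fun ω => (ξ' 0 0 ω : ℝ)) (fun ω => (d 0 0 ω : ℝ)) μ := by
    have hbase : IndepFun (ξ' 0 0) (d 0 0) μ :=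
      hind.indepFun (show (Sum.inr (Sum.inl (0,0)) : Coord) ≠ Sum.inr (Sum.inr (0,0)) by simp)
    exact hbase.comp (measurable_of_countable (fun n : ℕ => (n:ℝ)))
      (measurable_of_countable (fun n : ℕ => (n:ℝ)))
  have hint1 : Integrable (fun ω => (ξ 0 0 ω : ℝ) * (1 - (d 0 0 ω : ℝ))) μ := by
    exact hi1.integrable_mul intξ int1d
  have hint2 : Integrable (fun ω => (ξ' 0 0 ω : ℝ) * (d 0 0 ω : ℝ)) μ := by
    exact hi2.integrable_mul intξ' intd'
  have hIm1 : ∫ ω, (ξ 0 0 ω : ℝ) * (1 - (d 0 0 ω : ℝ)) ∂μ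
      = (∫ ω, (ξ 0 0 ω : ℝ) ∂μ) * (∫ ω, (1 - (d 0 0 ω : ℝ)) ∂μ) := by
    exact hi1.integral_mul_eq_mul_integral intξ.aestronglyMeasurable int1d.aestronglyMeasurable
  have hIm2 : ∫ ω, (ξ' 0 0 ω : ℝ) * (d 0 0 ω : ℝ) ∂μ
      = (∫ ω, (ξ' 0 0 ω : ℝ) ∂μ) * (∫ ω, (d 0 0 ω : ℝ) ∂μ) := by
    exact hi2.integral_mul_eq_mul_integral intξ'.aestronglyMeasurable intd'.aestronglyMeasurable
  rw [integral_congr_ae (Filter.Eventually.of_forall hptw), integral_add hint1 hint2,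
    hIm1, hIm2, integral_sub (integrable_const 1) intd', mean_d hmd hd01 hdBer hπ0]
  simp only [integral_const, measure_univ, probReal_univ, ENNReal.toReal_one, smul_eq_mul, mul_one]
  rw [← hmp, ← hmm, hm]
  ring

include hmξ hmξ' hmd hX0 hXrec hind hd01 hdBer hiid hiid' in
lemma slln_delta (hπ0 : 0 ≤ π) :
    ∀ᵐ ω ∂μ, Tendsto
      (fun n : ℕ => (∑ i ∈ Finset.range n, ((vfun ξ ξ' d X i ω).1 : ℝ)) / n)
      atTop (𝓝 π) := by
  have hmeas : ∀ k, Measurable (fun ω => ((vfun ξ ξ' d X k ω).1 : ℝ)) := fun k =>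
    (measurable_of_countable (fun p : ℕ × ℕ => (p.1 : ℝ))).comp
      (meas_vfun hmξ hmξ' hmd hX0 hXrec k)
  have hind2 : Pairwise (Function.onFun (IndepFun · · μ) fun k ω => ((vfun ξ ξ' d X k ω).1 : ℝ)) := by
    intro i j hij
    exact (hIndepV hmξ hmξ' hmd hX0 hXrec hind hd01 hdBer hiid hiid' hij).comp
      (measurable_of_countable (fun p : ℕ × ℕ => (p.1 : ℝ)))
      (measurable_of_countable (fun p : ℕ × ℕ => (p.1 : ℝ)))
  have hident : ∀ k, IdentDistrib (fun ω => ((vfun ξ ξ' d X k ω).1 : ℝ))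
      (fun ω => ((vfun ξ ξ' d X 0 ω).1 : ℝ)) μ μ := fun k =>
    (hIdentV hmξ hmξ' hmd hX0 hXrec hind hd01 hdBer hiid hiid' k).comp
      (measurable_of_countable (fun p : ℕ × ℕ => (p.1 : ℝ)))
  have hY0 : (fun ω => ((vfun ξ ξ' d X 0 ω).1 : ℝ)) = fun ω => (d 0 0 ω : ℝ) := by
    rw [vfun_zero hX0 hXrec]
  have hint : Integrable (fun ω => ((vfun ξ ξ' d X 0 ω).1 : ℝ)) μ := by
    rw [hY0]; exact int_d hmd hd01
  have hmean : ∫ ω, ((vfun ξ ξ' d X 0 ω).1 : ℝ) ∂μ = π := by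
    rw [hY0]
    exact mean_d hmd hd01 hdBer hπ0
  have hsl := strong_law_ae_real (fun k ω => ((vfun ξ ξ' d X k ω).1 : ℝ)) hint hind2 hident
  rw [hmean] at hsl
  exact hsl

include hmξ hmξ' hmd hX0 hXrec hind hd01 hdBer hiid hiid' in
lemma slln_eta (hπ0 : 0 ≤ π) {mp mm m : ℝ}
    (hmom4 : MemLp (fun ω => (ξ 0 0 ω : ℝ)) 4 μ)
    (hmom4' : MemLp (fun ω => (ξ' 0 0 ω : ℝ)) 4 μ)
    (hmp : mp = ∫ ω, (ξ 0 0 ω : ℝ) ∂μ)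
    (hmm : mm = ∫ ω, (ξ' 0 0 ω : ℝ) ∂μ)
    (hm : m = π * mm + (1 - π) * mp) :
    ∀ᵐ ω ∂μ, Tendsto
      (fun n : ℕ => (∑ i ∈ Finset.range n, ((vfun ξ ξ' d X i ω).2 : ℝ)) / n)
      atTop (𝓝 m) := by
  have hind2 : Pairwise (Function.onFun (IndepFun · · μ) fun k ω => ((vfun ξ ξ' d X k ω).2 : ℝ)) := by
    intro i j hij
    exact (hIndepV hmξ hmξ' hmd hX0 hXrec hind hd01 hdBer hiid hiid' hij).comp
      (measurable_of_countable (fun p : ℕ × ℕ => (p.2 : ℝ)))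
      (measurable_of_countable (fun p : ℕ × ℕ => (p.2 : ℝ)))
  have hident : ∀ k, IdentDistrib (fun ω => ((vfun ξ ξ' d X k ω).2 : ℝ))
      (fun ω => ((vfun ξ ξ' d X 0 ω).2 : ℝ)) μ μ := fun k =>
    (hIdentV hmξ hmξ' hmd hX0 hXrec hind hd01 hdBer hiid hiid' k).comp
      (measurable_of_countable (fun p : ℕ × ℕ => (p.2 : ℝ)))
  have hY0 : (fun ω => ((vfun ξ ξ' d X 0 ω).2 : ℝ))
      = fun ω => (ecomb ξ ξ' d 0 0 ω : ℝ) := by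
    rw [vfun_zero hX0 hXrec]
  have hint : Integrable (fun ω => ((vfun ξ ξ' d X 0 ω).2 : ℝ)) μ := by
    rw [hY0]; exact int_e hmξ hmξ' hmd hd01 hmom4 hmom4'
  have hmean : ∫ ω, ((vfun ξ ξ' d X 0 ω).2 : ℝ) ∂μ = m := by
    rw [hY0]
    exact mean_e hmξ hmξ' hmd hind hd01 hdBer hπ0 hmom4 hmom4' hmp hmm hm
  have hsl := strong_law_ae_real (fun k ω => ((vfun ξ ξ' d X k ω).2 : ℝ)) hint hind2 hident
  rw [hmean] at hsl
  exact hsl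

end SLLN

end Prob

/-- deterministic endgame: from the two strong laws along the total-progeny
sequence, deduce convergence of the ratio estimator. -/
lemma endgame {π m : ℝ} (hπ : 0 < π) (Zr : ℕ → ℝ) (Sd Se : ℕ → ℝ) (N : ℕ → ℕ)
    (hSd : Tendsto (fun t : ℕ => Sd t / t) atTop (𝓝 π))
    (hSe : Tendsto (fun t : ℕ => Se t / t) atTop (𝓝 m))
    (hN : Tendsto N atTop atTop)
    (hN1 : ∀ n, 1 ≤ N n)
    (hrec : ∀ n, (N (n+1) : ℝ) = 1 + Se (N n))
    (hden : ∀ n, (∑ i ∈ Finset.range (n+1), Zr i) = Sd (N n))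
    (hnum0 : ∀ n, (∑ i ∈ Finset.range n, Zr (i+1))
      = (∑ i ∈ Finset.range (n+1), Zr i) - Zr 0) :
    Tendsto (fun n => (∑ i ∈ Finset.range n, Zr (i+1))
      / (∑ i ∈ Finset.range n, Zr i)) atTop (𝓝 m) := by
  rw [← tendsto_add_atTop_iff_nat 1]
  have hNc : Tendsto (fun n => (N n : ℝ)) atTop atTop :=
    tendsto_natCast_atTop_atTop.comp hN
  have hN' : Tendsto (fun n => N (n+1)) atTop atTop :=
    hN.comp (tendsto_add_atTop_nat 1)
  have hA : Tendsto (fun n => Sd (N n) / (N n : ℝ)) atTop (𝓝 π) := hSd.comp hN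
  have hA' : Tendsto (fun n => Sd (N (n+1)) / ((N (n+1) : ℕ) : ℝ)) atTop (𝓝 π) :=
    hSd.comp hN'
  have hB : Tendsto (fun n => Se (N n) / (N n : ℝ)) atTop (𝓝 m) := hSe.comp hN
  have hinv : Tendsto (fun n => ((N n : ℝ))⁻¹) atTop (𝓝 0) := by
    exact hNc.inv_tendsto_atTop
  have hR : Tendsto (fun n => ((N (n+1) : ℝ) / (N n : ℝ))) atTop (𝓝 m) := by
    have h0 := hinv.add hB
    rw [zero_add] at h0
    exact h0.congr (fun n => by rw [hrec n, add_div, one_div])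
  have hSdN : Tendsto (fun n => Sd (N n)) atTop atTop := by
    have h1 : Tendsto (fun n => (Sd (N n) / (N n : ℝ)) * (N n : ℝ)) atTop atTop :=
      hA.pos_mul_atTop hπ hNc
    exact h1.congr (fun n => div_mul_cancel₀ _
      (Nat.cast_ne_zero.mpr (by have := hN1 n; omega)))
  have hpos : ∀ᶠ n in atTop, 1 ≤ Sd (N n) := hSdN.eventually_ge_atTop 1
  have hC : Tendsto (fun n => ((N n : ℝ) / Sd (N n))) atTop (𝓝 π⁻¹) := by
    have h2 := hA.inv₀ (ne_of_gt hπ)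
    exact h2.congr (fun n => by rw [inv_div])
  have hD : Tendsto (fun n => Zr 0 / Sd (N n)) atTop (𝓝 0) :=
    tendsto_const_nhds.div_atTop hSdN
  have hfinal := ((hA'.mul hR).mul hC).sub hD
  have hval : π * m * π⁻¹ - 0 = m := by
    rw [sub_zero, mul_comm π m, mul_assoc, mul_inv_cancel₀ (ne_of_gt hπ), mul_one]
  rw [hval] at hfinal
  apply Tendsto.congr' _ hfinal
  filter_upwards [hpos] with n hp
  have h1 : (N n : ℝ) ≠ 0 := Nat.cast_ne_zero.mpr (by have := hN1 n; omega)
  have h2 : ((N (n+1) : ℕ) : ℝ) ≠ 0 := Nat.cast_ne_zero.mpr (by have := hN1 (n+1); omega)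
  have h3 : Sd (N n) ≠ 0 := by linarith
  rw [hnum0 (n+1), hden (n+1), hden n]
  field_simp

end POBP


/-- Theorem 1(b): in the partially observed branching process, the estimator
`m̃_n = (Σ_{i=1}^n Z_i) / (Σ_{i=0}^{n−1} Z_i)` converges to `m = π·m_- + (1−π)·m_+`
almost surely on the explosion set `{X_n → ∞}`. -/
theorem pobp_mtilde_consistent
    {Ω : Type*} [MeasurableSpace Ω] (μ : Measure Ω) [IsProbabilityMeasure μ]
    (ξ ξ' d : ℕ → ℕ → Ω → ℕ)
    (hmξ : ∀ n i, Measurable (ξ n i)) (hmξ' : ∀ n i, Measurable (ξ' n i))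
    (hmd : ∀ n i, Measurable (d n i))
    (π : ℝ) (hπ0 : 0 < π) (hπ1 : π < 1)
    (hd01 : ∀ n i ω, d n i ω ≤ 1)
    (hdBer : ∀ n i, μ {ω | d n i ω = 1} = ENNReal.ofReal π)
    (hiid : ∀ n i, μ.map (ξ n i) = μ.map (ξ 0 0))
    (hiid' : ∀ n i, μ.map (ξ' n i) = μ.map (ξ' 0 0))
    (hindep : iIndepFun
      (Sum.elim (fun q : ℕ × ℕ => ξ q.1 q.2)
        (Sum.elim (fun q : ℕ × ℕ => ξ' q.1 q.2) (fun q : ℕ × ℕ => d q.1 q.2))) μ)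
    (hmom4 : MemLp (fun ω => (ξ 0 0 ω : ℝ)) 4 μ)
    (hmom4' : MemLp (fun ω => (ξ' 0 0 ω : ℝ)) 4 μ)
    (hstoch : ∀ k : ℕ, μ {ω | ξ 0 0 ω ≤ k} ≤ μ {ω | ξ' 0 0 ω ≤ k})
    (hnondeg : μ {ω | ξ 0 0 ω = 0} < 1)
    (mp mm m : ℝ)
    (hmp : mp = ∫ ω, (ξ 0 0 ω : ℝ) ∂μ)
    (hmm : mm = ∫ ω, (ξ' 0 0 ω : ℝ) ∂μ)
    (hm : m = π * mm + (1 - π) * mp)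
    (X Z : ℕ → Ω → ℕ)
    (hX0 : ∀ ω, X 0 ω = 1)
    (hZ : ∀ n ω, Z n ω = ∑ i ∈ Finset.range (X n ω), d n i ω)
    (hXrec : ∀ n ω, X (n + 1) ω =
      ∑ i ∈ Finset.range (X n ω), (ξ n i ω * (1 - d n i ω) + ξ' n i ω * d n i ω))
    :
    ∀ᵐ ω ∂μ, Tendsto (fun k => X k ω) atTop atTop →
      Tendsto (fun n => (∑ i ∈ Finset.range n, (Z (i + 1) ω : ℝ))
          / (∑ i ∈ Finset.range n, (Z i ω : ℝ))) atTop (nhds m) := by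
  have hind : iIndepFun (POBP.fam ξ ξ' d) μ := hindep
  have hslδ := POBP.slln_delta hmξ hmξ' hmd hX0 hXrec hind hd01 hdBer hiid hiid' hπ0.le
  have hslη := POBP.slln_eta hmξ hmξ' hmd hX0 hXrec hind hd01 hdBer hiid hiid'
    hπ0.le hmom4 hmom4' hmp hmm hm
  filter_upwards [hslδ, hslη] with ω hδ hη hexp
  refine POBP.endgame hπ0 (fun i => (Z i ω : ℝ))
    (fun t => ∑ k ∈ Finset.range t, ((POBP.vfun ξ ξ' d X k ω).1 : ℝ))
    (fun t => ∑ k ∈ Finset.range t, ((POBP.vfun ξ ξ' d X k ω).2 : ℝ))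
    (fun n => POBP.Ucum X (n+1) ω) hδ hη ?_ ?_ ?_ ?_ ?_
  · -- N → ∞
    apply tendsto_atTop_mono _ hexp
    intro n
    exact Finset.single_le_sum (f := fun i => X i ω) (fun i _ => Nat.zero_le _)
      (Finset.mem_range.mpr (by omega))
  · -- N ≥ 1
    intro n
    have h := Finset.single_le_sum (f := fun i => X i ω) (fun i _ => Nat.zero_le _)
      (Finset.mem_range.mpr (show 0 < n + 1 by omega))
    exact le_trans (le_of_eq (hX0 ω).symm) h
  · -- recursion
    intro n
    show ((POBP.Ucum X (n+1+1) ω : ℕ) : ℝ)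
      = 1 + ∑ k ∈ Finset.range (POBP.Ucum X (n+1) ω), ((POBP.vfun ξ ξ' d X k ω).2 : ℝ)
    have h := POBP.X_cumsum (ξ := ξ) (ξ' := ξ') (d := d) hX0 hXrec (ω := ω) (n+1)
    rw [h]
    push_cast
    simp [POBP.vfun]
  · -- denominator identity
    intro n
    show (∑ i ∈ Finset.range (n+1), (Z i ω : ℝ))
      = ∑ k ∈ Finset.range (POBP.Ucum X (n+1) ω), ((POBP.vfun ξ ξ' d X k ω).1 : ℝ)
    have h := POBP.Z_cumsum hX0 hXrec hZ (ω := ω) (n+1)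
    rw [← Nat.cast_sum, h, Nat.cast_sum]
    simp [POBP.vfun]
  · -- numerator identity
    intro n
    rw [Finset.sum_range_succ']
    ring
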